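/- arXiv:1306.3853 — 4 statements merged into one kernel-verified Lean document; each statement's English description precedes it below -/
import Mathlib

section
/- Let L ⊋ K be a proper field extension with [L:K] < ∞. Then L is not the union of finitely many fields M with K ⊆ M ⊊ L. -/
/-!
Over an infinite field `K` a vector space is never a finite union of proper subspaces, and
intermediate fields are in particular `K`-subspaces. Over a finite field `K` the extension `L` is a
finite field, so it is generated by a single element (a generator of `Lˣ`), and any intermediate
field containing that element is all of `L`.
-/

namespace IntermediateField

variable {K L : Type*} [Field K] [Field L] [Algebra K L]

theorem exists_eq_top_of_iUnion_eq_univ_of_infinite [Infinite K] {ι : Type*} [Finite ι]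
    {M : ι → IntermediateField K L} (hcover : ⋃ i, (M i : Set L) = Set.univ) :
    ∃ i, M i = ⊤ := by
  obtain ⟨i, hi⟩ := Subspace.exists_eq_top_of_iUnion_eq_univ
    (p := fun i => Subalgebra.toSubmodule (M i).toSubalgebra) hcover
  refine ⟨i, toSubalgebra_injective (Subalgebra.toSubmodule_injective ?_)⟩
  simpa using hi

theorem exists_eq_top_of_iUnion_eq_univ_of_finite [Finite K] [FiniteDimensional K L]
    {ι : Type*} {M : ι → IntermediateField K L} (hcover : ⋃ i, (M i : Set L) = Set.univ) :
    ∃ i, M i = ⊤ := by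
  obtain ⟨α, hα⟩ := Field.exists_primitive_element_of_finite_bot K L
  obtain ⟨i, hαi⟩ := Set.mem_iUnion.mp (hcover ▸ Set.mem_univ α)
  exact ⟨i, top_le_iff.mp (hα ▸ adjoin_simple_le_iff.mpr hαi)⟩

theorem exists_eq_top_of_iUnion_eq_univ [FiniteDimensional K L] {ι : Type*} [Finite ι]
    {M : ι → IntermediateField K L} (hcover : ⋃ i, (M i : Set L) = Set.univ) :
    ∃ i, M i = ⊤ := by
  cases finite_or_infinite K
  · exact exists_eq_top_of_iUnion_eq_univ_of_finite hcover
  · exact exists_eq_top_of_iUnion_eq_univ_of_infinite hcover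

end IntermediateField

theorem not_union_of_proper_intermediateFields_general (K L : Type*) [Field K] [Field L]
    [Algebra K L] [FiniteDimensional K L] :
    ¬ ∃ s : Finset (IntermediateField K L),
        (∀ M ∈ s, M ≠ ⊤) ∧ ∀ x : L, ∃ M ∈ s, x ∈ M := by
  rintro ⟨s, hproper, hcover⟩
  have hcover' : ⋃ M : s, ((M : IntermediateField K L) : Set L) = Set.univ :=
    Set.eq_univ_of_forall fun x => by simpa using hcover x
  obtain ⟨M, hM⟩ := IntermediateField.exists_eq_top_of_iUnion_eq_univ hcover'
  exact hproper M M.2 hM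

/-- If `L ⊋ K` is a proper field extension with `[L:K] < ∞`, then `L` is not the union of
finitely many intermediate fields `M` with `K ⊆ M ⊊ L`. -/
theorem not_union_of_proper_intermediateFields (K L : Type*) [Field K] [Field L]
    [Algebra K L] [FiniteDimensional K L]
    (h : ¬ Function.Surjective (algebraMap K L)) :
    ¬ ∃ s : Finset (IntermediateField K L),
        (∀ M ∈ s, M ≠ ⊤) ∧ ∀ x : L, ∃ M ∈ s, x ∈ M :=
  not_union_of_proper_intermediateFields_general K L
end

section
/- Let L ⊇ K be a field extension with [L:K] < ∞ and G = Aut(L,K). Then there exists z ∈ L whose stabilizer in G is trivial, i.e., the only σ ∈ G with σ(z) = z is the identity. -/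
/-!
By Artin's theorem, a finite group `G` acting faithfully on a field `L` is the Galois group of
`L` over the fixed field `F = L^G`; in particular `L/F` is finite separable, so `L = F⟮z⟯` for a
primitive element `z`. An element of `G` fixing `z` fixes `F⟮z⟯ = L`, hence is the identity.
Apply this to `G = Aut(L/K)`, which is finite because `[L:K] < ∞`.
-/

open IntermediateField

theorem MulAction.stabilizer_le_fixingSubgroup_adjoin_simple {G F L : Type*} [Group G] [Field F]
    [Field L] [Algebra F L] [MulSemiringAction G L] [SMulCommClass G F L] (z : L) :
    stabilizer G z ≤ fixingSubgroup G (F⟮z⟯ : Set L) :=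
  (IsGaloisGroup.le_fixedPoints_iff_le_fixingSubgroup ..).mp <|
    adjoin_simple_le_iff.mpr fun σ ↦ σ.2

theorem MulAction.exists_stabilizer_eq_bot (G L : Type*) [Group G] [Finite G] [Field L]
    [MulSemiringAction G L] [FaithfulSMul G L] : ∃ z : L, stabilizer G z = ⊥ := by
  let F := FixedPoints.subfield G L
  obtain ⟨z, hz⟩ := Field.exists_primitive_element F L
  refine ⟨z, eq_bot_iff.mpr ?_⟩
  calc stabilizer G z ≤ fixingSubgroup G (F⟮z⟯ : Set L) :=
        stabilizer_le_fixingSubgroup_adjoin_simple z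
    _ = ⊥ := by rw [hz, IsGaloisGroup.fixingSubgroup_top G F L]

/-- For a finite-degree field extension `L/K` with `G = Aut(L,K)`, there exists `z ∈ L`
whose stabilizer in `G` is trivial: the only `σ ∈ G` with `σ z = z` is the identity. -/
theorem exists_trivial_stabilizer (K L : Type*) [Field K] [Field L]
    [Algebra K L] [FiniteDimensional K L] :
    ∃ z : L, ∀ σ : L ≃ₐ[K] L, σ z = z → σ = AlgEquiv.refl := by
  obtain ⟨z, hz⟩ := MulAction.exists_stabilizer_eq_bot (L ≃ₐ[K] L) L
  refine ⟨z, fun σ hσ ↦ ?_⟩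
  have hσ_stab : σ ∈ MulAction.stabilizer (L ≃ₐ[K] L) z := hσ
  rw [hz] at hσ_stab
  exact Subgroup.mem_bot.mp hσ_stab
end

section
/- Let L ⊇ K be a field extension with [L:K] < ∞ and G = Aut(L,K). If |G| = [L:K], then there exists z ∈ L such that L = K(z), the minimal polynomial μ_z of z over K has only simple roots in L, and L is a splitting field of μ_z over K; moreover μ_z = ∏_{σ ∈ G} (X − σ(z)). -/
/-!
`|Aut(L/K)| = [L:K]` makes `L/K` Galois, hence separable, so it has a primitive element `z`.
An automorphism is determined by its value at `z`, so the `σ z` are `|Aut(L/K)| = deg μ_z`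
distinct roots of the monic polynomial `μ_z`, which is therefore `∏ σ, (X - σ z)`.
-/

open Polynomial IntermediateField

theorem Polynomial.eq_prod_X_sub_C_of_injective_of_isRoot {R ι : Type*} [Field R] [Fintype ι]
    {p : R[X]} (hp : p.Monic) {f : ι → R} (hf : Function.Injective f)
    (hroot : ∀ i, p.IsRoot (f i)) (hdeg : p.natDegree ≤ Fintype.card ι) :
    p = ∏ i, (X - C (f i)) := by
  classical
  have hdvd : ∏ i, (X - C (f i)) ∣ p :=
    Finset.prod_dvd_of_coprime ((pairwise_coprime_X_sub_C hf).set_pairwise _)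
      fun i _ => dvd_iff_isRoot.mpr (hroot i)
  refine eq_of_monic_of_dvd_of_natDegree_le (monic_prod_X_sub_C _ _) hp hdvd ?_
  rwa [natDegree_finsetProd_X_sub_C_eq_card, Finset.card_univ]

theorem Algebra.adjoin_singleton_eq_top_of_adjoin_simple_eq_top {K L : Type*} [Field K] [Field L]
    [Algebra K L] {z : L} (hz : IsIntegral K z) (h : K⟮z⟯ = ⊤) :
    Algebra.adjoin K {z} = ⊤ := by
  rw [← adjoin_simple_toSubalgebra_of_isAlgebraic hz.isAlgebraic, h, top_toSubalgebra]

theorem AlgHom.injective_eval_of_adjoin_eq_top {R A B : Type*} [CommSemiring R] [Semiring A]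
    [Semiring B] [Algebra R A] [Algebra R B] {a : A} (h : Algebra.adjoin R {a} = ⊤) :
    Function.Injective fun σ : A →ₐ[R] B => σ a :=
  fun _ _ hσ => AlgHom.ext_of_adjoin_eq_top h fun _ hx => hx ▸ hσ

section PrimitiveElement

variable {K L : Type*} [Field K] [Field L] [Algebra K L] {z : L}

theorem Algebra.adjoin_rootSet_minpoly_eq_top (hz : IsIntegral K z)
    (h : Algebra.adjoin K {z} = ⊤) :
    Algebra.adjoin K ((minpoly K z).rootSet L) = ⊤ := by
  refine top_le_iff.mp (h ▸ Algebra.adjoin_mono ?_)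
  rw [Set.singleton_subset_iff, mem_rootSet]
  exact ⟨minpoly.ne_zero hz, minpoly.aeval K z⟩

theorem minpoly.map_eq_prod_algEquiv [FiniteDimensional K L]
    (hcard : Nat.card (L ≃ₐ[K] L) = Module.finrank K L) (hz : K⟮z⟯ = ⊤) :
    (minpoly K z).map (algebraMap K L) = ∏ σ : L ≃ₐ[K] L, (X - C (σ z)) := by
  have hint : IsIntegral K z := .of_finite K z
  have hinj : Function.Injective fun σ : L ≃ₐ[K] L => σ z := fun σ τ hστ =>
    AlgEquiv.coe_toAlgHom_injective <| AlgHom.injective_eval_of_adjoin_eq_top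
      (Algebra.adjoin_singleton_eq_top_of_adjoin_simple_eq_top hint hz) hστ
  refine eq_prod_X_sub_C_of_injective_of_isRoot ((minpoly.monic hint).map _) hinj
    (fun σ => ?_) ?_
  · rw [IsRoot, eval_map_algebraMap, aeval_algHom_apply, minpoly.aeval, map_zero]
  · rw [natDegree_map, ← adjoin.finrank hint, hz, finrank_top', ← hcard,
      Nat.card_eq_fintype_card]

end PrimitiveElement

/-- Let `L/K` be a finite-degree field extension with `G = Aut(L,K)`. If `|G| = [L:K]`,
then there exists `z ∈ L` with `L = K(z)`, the minimal polynomial `μ_z` of `z` over `K`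
has only simple roots in `L`, and `L` is a splitting field of `μ_z` over `K`; moreover
`μ_z = ∏_{σ ∈ G} (X - σ z)` (as a polynomial over `L`). -/
theorem exists_primitive_element_of_card_aut_eq_finrank (K L : Type*) [Field K] [Field L]
    [Algebra K L] [FiniteDimensional K L]
    (h : Nat.card (L ≃ₐ[K] L) = Module.finrank K L) :
    ∃ z : L, IntermediateField.adjoin K {z} = ⊤ ∧
      ((minpoly K z).map (algebraMap K L)).roots.Nodup ∧
      Polynomial.Splits ((minpoly K z).map (algebraMap K L)) ∧
      Algebra.adjoin K ((minpoly K z).rootSet L) = ⊤ ∧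
      (minpoly K z).map (algebraMap K L) =
        ∏ σ : L ≃ₐ[K] L, (X - C (σ z)) := by
  have : IsGalois K L := IsGalois.of_card_aut_eq_finrank K L h
  obtain ⟨z, hz⟩ := Field.exists_primitive_element K L
  have hint : IsIntegral K z := .of_finite K z
  have hsep : (minpoly K z).Separable := Algebra.IsSeparable.isSeparable K z
  exact ⟨z, hz, nodup_roots hsep.map, Normal.splits inferInstance z,
    Algebra.adjoin_rootSet_minpoly_eq_top hint
      (Algebra.adjoin_singleton_eq_top_of_adjoin_simple_eq_top hint hz),
    minpoly.map_eq_prod_algEquiv h hz⟩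
end

section
/- Let L ⊇ K be a field extension with [L:K] < ∞ and G = Aut(L,K). If K = {y ∈ L : σ(y) = y for all σ ∈ G}, then L is a splitting field over K of a nonzero polynomial f ∈ K[X] that has no multiple roots in L. -/
open Polynomial

theorem IsGalois.of_forall_fixed_mem_range (K L : Type*) [Field K] [Field L] [Algebra K L]
    [FiniteDimensional K L]
    (h : ∀ y : L, (∀ σ : L ≃ₐ[K] L, σ y = y) → y ∈ (algebraMap K L).range) :
    IsGalois K L := by
  refine IsGalois.of_fixedField_eq_bot K L (eq_bot_iff.mpr fun y hy => ?_)
  exact h y fun σ => hy ⟨σ, Subgroup.mem_top σ⟩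

/-- Let `L/K` be a finite-degree field extension with `G = Aut(L,K)`. If `K` is exactly
the set of elements of `L` fixed by every `σ ∈ G`, then `L` is a splitting field over
`K` of a nonzero polynomial `f ∈ K[X]` with no multiple roots in `L`. -/
theorem splitting_field_of_fixed_field_eq_bot (K L : Type*) [Field K] [Field L]
    [Algebra K L] [FiniteDimensional K L]
    (h : ∀ y : L, (∀ σ : L ≃ₐ[K] L, σ y = y) → ∃ x : K, algebraMap K L x = y) :
    ∃ f : Polynomial K, f ≠ 0 ∧ (f.map (algebraMap K L)).Splits ∧
      Algebra.adjoin K (f.rootSet L) = ⊤ ∧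
      ((f.map (algebraMap K L)).roots).Nodup := by
  have : IsGalois K L := IsGalois.of_forall_fixed_mem_range K L h
  obtain ⟨f, hf_sep, hf_split⟩ := IsGalois.is_separable_splitting_field K L
  exact ⟨f, hf_sep.ne_zero, IsSplittingField.splits L f, IsSplittingField.adjoin_rootSet L f,
    nodup_roots hf_sep.map⟩
end
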